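/- arXiv:2501.05145 — 8 statements merged into one kernel-verified Lean document; each statement's English description precedes it below -/
import Mathlib

section
/- Let B be a balanced bipartite graph with parts V1, V2 of size n each, with minimum degree δ(B) ≥ n/2 + 1. Then every subset S of the vertices with |S| = n + 2 induces a subgraph containing at least n + 2 edges, and hence B[S] contains a cycle. -/
/-!
Let a = |S ∩ V1| ≤ b = |S ∩ V2|, so a + b = n + 2 and, as b ≤ n, a ≥ 2. A vertex of S ∩ V1 has all
its neighbours in V2 and at most n - b = a - 2 of them outside S, so it has at least
(n + 2)/2 - (a - 2) neighbours in S ∩ V2. Summing over S ∩ V1 gives 2e(B[S]) ≥ a(b - a + 4), and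
a(b - a + 4) - 2(a + b) = (a - 2)(b - a) ≥ 0. A cycle exists because an acyclic graph lies inside a
spanning tree of the complete graph, hence has fewer edges than vertices.
-/

open Finset SimpleGraph

namespace SimpleGraph

variable {V : Type*} {G : SimpleGraph V}

theorem IsAcyclic.ncard_edgeSet_lt [Finite V] [Nonempty V] (hG : G.IsAcyclic) :
    G.edgeSet.ncard < Nat.card V := by
  classical
  have := Fintype.ofFinite V
  obtain ⟨T, hGT, -, hT⟩ := connected_top.exists_isTree_le_of_le_of_isAcyclic le_top hG
  have hTcard := hT.card_edgeFinset
  rw [← Set.ncard_coe_finset, coe_edgeFinset] at hTcard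
  have hGT' : G.edgeSet.ncard ≤ T.edgeSet.ncard :=
    Set.ncard_le_ncard (edgeSet_mono hGT) T.edgeSet.toFinite
  rw [Nat.card_eq_fintype_card]
  omega

variable [DecidableRel G.Adj]

theorem card_interedges_eq_sum (s t : Finset V) :
    #(G.interedges s t) = ∑ u ∈ s, #{v ∈ t | G.Adj u v} := by
  rw [interedges_def, card_filter, sum_product]
  simp only [card_filter]

variable [Fintype V] [DecidableEq V]

theorem card_interedges_le_ncard_edgeSet_induce {s t S : Finset V} (hst : Disjoint s t)
    (hs : s ⊆ S) (ht : t ⊆ S) :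
    #(G.interedges s t) ≤ (G.induce (S : Set V)).edgeSet.ncard := by
  rw [← coe_edgeFinset, Set.ncard_coe_finset, ← card_filter_edgeFinset_toFinset_subset]
  refine card_le_card_of_injOn (fun p => s(p.1, p.2)) (fun p hp => ?_) ?_
  · rw [mem_coe, mem_interedges_iff] at hp
    simp [hp.2.2, Sym2.toFinset_mk_eq, insert_subset_iff, hs hp.1, ht hp.2.1]
  · rintro ⟨a, b⟩ hab ⟨c, d⟩ hcd h
    rw [mem_coe, mk_mem_interedges_iff] at hab hcd
    rcases Sym2.eq_iff.1 h with ⟨rfl, rfl⟩ | ⟨rfl, -⟩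
    · rfl
    · exact absurd hcd.2.1 (Finset.disjoint_left.1 hst hab.1)

theorem degree_le_card_filter_adj_add_card_sdiff {u : V} {B T : Finset V}
    (hN : G.neighborFinset u ⊆ T) (hB : B ⊆ T) :
    G.degree u ≤ #{v ∈ B | G.Adj u v} + (#T - #B) := by
  have hcover : G.neighborFinset u ⊆ {v ∈ B | G.Adj u v} ∪ (T \ B) := by
    intro v hv
    by_cases hvB : v ∈ B
    · exact mem_union_left _ (mem_filter.2 ⟨hvB, (mem_neighborFinset _ _ _).1 hv⟩)
    · exact mem_union_right _ (mem_sdiff.2 ⟨hN hv, hvB⟩)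
  rw [← card_neighborFinset_eq_degree, ← card_sdiff_of_subset hB]
  exact (card_le_card hcover).trans (card_union_le _ _)

theorem IsBipartiteWith.sum_degree_le {V₁ V₂ : Finset V} (h : G.IsBipartiteWith V₁ V₂)
    (S : Finset V) :
    ∑ u ∈ S ∩ V₁, G.degree u ≤
      (G.induce (S : Set V)).edgeSet.ncard + #(S ∩ V₁) * (#V₂ - #(S ∩ V₂)) := by
  have hdisj : Disjoint (S ∩ V₁) (S ∩ V₂) :=
    (disjoint_coe.1 h.disjoint).mono inter_subset_right inter_subset_right
  calc ∑ u ∈ S ∩ V₁, G.degree u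
      ≤ ∑ u ∈ S ∩ V₁, (#{v ∈ S ∩ V₂ | G.Adj u v} + (#V₂ - #(S ∩ V₂))) :=
        sum_le_sum fun u hu => degree_le_card_filter_adj_add_card_sdiff
          (isBipartiteWith_neighborFinset_subset h (mem_inter.1 hu).2) inter_subset_right
    _ = #(G.interedges (S ∩ V₁) (S ∩ V₂)) + #(S ∩ V₁) * (#V₂ - #(S ∩ V₂)) := by
        rw [sum_add_distrib, card_interedges_eq_sum, sum_const, smul_eq_mul]
    _ ≤ _ := Nat.add_le_add_right
        (card_interedges_le_ncard_edgeSet_induce hdisj inter_subset_left inter_subset_left) _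

theorem IsBipartiteWith.le_ncard_edgeSet_induce {n : ℕ} {V₁ V₂ S : Finset V}
    (h : G.IsBipartiteWith V₁ V₂) (hunion : V₁ ∪ V₂ = univ) (hV₂ : #V₂ = n)
    (hdeg : ∀ v, n + 2 ≤ 2 * G.degree v) (hS : #S = n + 2) (hle : #(S ∩ V₁) ≤ #(S ∩ V₂)) :
    n + 2 ≤ (G.induce (S : Set V)).edgeSet.ncard := by
  have hsum := h.sum_degree_le S
  have hdeg_sum := card_nsmul_le_sum (S ∩ V₁) (fun u => 2 * G.degree u) (n + 2) fun u _ => hdeg u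
  rw [smul_eq_mul, ← mul_sum] at hdeg_sum
  have hab : #(S ∩ V₁) + #(S ∩ V₂) = n + 2 := by
    rw [← hS, ← card_union_of_disjoint
      ((disjoint_coe.1 h.disjoint).mono inter_subset_right inter_subset_right),
      ← inter_union_distrib_left, hunion, inter_univ]
  have hb : #(S ∩ V₂) ≤ n := hV₂ ▸ card_le_card inter_subset_right
  set a := #(S ∩ V₁)
  set b := #(S ∩ V₂)
  rw [hV₂] at hsum
  have hnb : n - b = a - 2 := by omega
  rw [hnb] at hsum
  have ha : 2 ≤ a := by omega
  zify [ha] at hsum hdeg_sum hab ⊢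
  nlinarith [mul_nonneg (by omega : (0:ℤ) ≤ a - 2) (by omega : (0:ℤ) ≤ b - a)]

end SimpleGraph

theorem stmt2 {V : Type} [Fintype V] [DecidableEq V] (G : SimpleGraph V)
    [DecidableRel G.Adj] (n : ℕ) (V1 V2 : Finset V)
    (hdisj : Disjoint V1 V2) (hunion : V1 ∪ V2 = Finset.univ)
    (hc1 : V1.card = n) (hc2 : V2.card = n)
    (hbip : ∀ u v, G.Adj u v → (u ∈ V1 ∧ v ∈ V2) ∨ (u ∈ V2 ∧ v ∈ V1))
    (hdeg : ∀ v, n + 2 ≤ 2 * G.degree v)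
    (S : Finset V) (hS : S.card = n + 2) :
    n + 2 ≤ ((G.induce (S : Set V)).edgeSet).ncard ∧
      ¬ (G.induce (S : Set V)).IsAcyclic := by
  have hG : G.IsBipartiteWith V1 V2 := ⟨disjoint_coe.2 hdisj, hbip⟩
  have hedges : n + 2 ≤ (G.induce (S : Set V)).edgeSet.ncard := by
    rcases le_total #(S ∩ V1) #(S ∩ V2) with hle | hle
    · exact hG.le_ncard_edgeSet_induce hunion hc2 hdeg hS hle
    · exact hG.symm.le_ncard_edgeSet_induce (union_comm V1 V2 ▸ hunion) hc1 hdeg hS hle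
  refine ⟨hedges, fun hacyc => ?_⟩
  have : Nonempty (S : Set V) := (card_pos.1 (by omega)).to_subtype
  have hlt := hacyc.ncard_edgeSet_lt
  rw [Nat.card_coe_set_eq, Set.ncard_coe_finset] at hlt
  omega
end

section
/- For every integer n ≥ 2 there exists a balanced bipartite graph B on 2n vertices with minimum degree exactly ⌈n/2⌉ and forest number n + 2. -/
/-!
Write `B` for the second part. Every vertex of `B` is adjacent to `a₁` or `a₂`, and `a₁`, `a₂`
have at most one common neighbour, so `{a₁, a₂} ∪ B` induces two stars sharing at most a leaf:
a forest on `n + 2` vertices. Conversely, an induced forest contains no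
4-cycle, so two of its vertices have at most one common neighbour in it. If it met the first part
in at least three vertices, one of them, `w`, would be adjacent to all of `B`, and every vertex of
`B` would be a common neighbour of `w` and one of two further vertices; so the forest would meet
`B` in at most two vertices.
-/

open Finset SimpleGraph

/-- The forest number of `G`: the maximum size of a vertex subset inducing an acyclic
(induced) subgraph. -/
noncomputable def forestNum {V : Type} [Fintype V] (G : SimpleGraph V) : ℕ :=
  sSup {k | ∃ S : Finset V, S.card = k ∧ (G.induce (S : Set V)).IsAcyclic}

theorem forestNum_eq {V : Type} [Fintype V] {G : SimpleGraph V} {k : ℕ} (S : Finset V)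
    (hS : #S = k) (hacyc : (G.induce (S : Set V)).IsAcyclic)
    (hle : ∀ T : Finset V, (G.induce (T : Set V)).IsAcyclic → #T ≤ k) : forestNum G = k :=
  IsGreatest.csSup_eq ⟨⟨S, hS, hacyc⟩, by rintro _ ⟨T, rfl, hT⟩; exact hle T hT⟩

namespace SimpleGraph

variable {V : Type*} {G : SimpleGraph V}

theorem IsAcyclic.eq_of_adj_of_adj (hG : G.IsAcyclic) {u v b b' : V} (huv : u ≠ v)
    (hub : G.Adj u b) (hvb : G.Adj v b) (hub' : G.Adj u b') (hvb' : G.Adj v b') : b = b' := by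
  have hpath : ∀ {c} (huc : G.Adj u c) (hvc : G.Adj v c),
      (Walk.cons huc (Walk.cons hvc.symm .nil)).IsPath := by
    intro c huc hvc
    simp [Walk.cons_isPath_iff, huc.ne, huv, hvc.ne']
  have := (hG.subsingleton_path u v).elim ⟨_, hpath hub hvb⟩ ⟨_, hpath hub' hvb'⟩
  simpa using congrArg (fun p : G.Path u v => p.1.getVert 1) this

theorem IsAcyclic.card_filter_adj_adj_le_one [DecidableRel G.Adj] {S : Finset V}
    (hS : (G.induce (S : Set V)).IsAcyclic) {u v : V} (hu : u ∈ S) (hv : v ∈ S) (huv : u ≠ v) :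
    #{b ∈ S | G.Adj u b ∧ G.Adj v b} ≤ 1 := by
  refine card_le_one.2 fun b hb b' hb' => ?_
  simp only [mem_filter] at hb hb'
  have := hS.eq_of_adj_of_adj (u := ⟨u, hu⟩) (v := ⟨v, hv⟩) (b := ⟨b, hb.1⟩) (b' := ⟨b', hb'.1⟩)
    (by simpa using huv) hb.2.1 hb.2.2 hb'.2.1 hb'.2.2
  simpa using this

theorem isBridge_of_adj_cover_pair {p q y : V} (hpq : p ≠ q) (hnadj : ¬ G.Adj p q)
    (hcover : ∀ ⦃u v⦄, G.Adj u v → u = p ∨ u = q ∨ v = p ∨ v = q)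
    (hcommon : ∀ ⦃b b'⦄, G.Adj p b → G.Adj q b → G.Adj p b' → G.Adj q b' → b = b')
    (hpy : G.Adj p y) : G.IsBridge s(p, y) := by
  have hyp : y ≠ p := hpy.ne'
  have hyq : y ≠ q := by rintro rfl; exact hnadj hpy
  -- The component of `y` once `s(p, y)` is deleted: `{y}` if `q ≁ y`, else `y`, `q` and `N(q)`.
  set C : Set V := {v | v = y ∨ (G.Adj q y ∧ (v = q ∨ G.Adj q v))}
  have hpC : p ∉ C := by
    rintro (h | ⟨-, h | h⟩)
    exacts [hyp h.symm, hpq h, hnadj h.symm]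
  rintro ⟨w⟩
  obtain ⟨⟨⟨v, w⟩, hdel⟩, -, hv, hw⟩ := w.reverse.exists_boundary_dart C (Or.inl rfl) hpC
  dsimp only at hdel hv hw
  obtain ⟨hvw, hne⟩ := deleteEdges_adj.1 hdel
  clear hdel
  by_cases hvq : v = q
  · subst hvq
    obtain ⟨hqy, -⟩ := hv.resolve_left (Ne.symm hyq)
    exact hw (Or.inr ⟨hqy, Or.inr hvw⟩)
  have hvp : v ≠ p := by rintro rfl; exact hpC hv
  rcases hcover hvw with h | h | rfl | rfl
  · exact hvp h
  · exact hvq h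
  · have hvy : v = y := by
      rcases hv with h | ⟨hqy, h | h⟩
      exacts [h, (hvq h).elim, hcommon hvw.symm h hpy hqy]
    subst hvy
    exact hne (by simp [Sym2.eq_swap])
  · apply hw (Or.inr ⟨?_, Or.inl rfl⟩)
    rcases hv with rfl | ⟨hqy, -⟩
    exacts [hvw.symm, hqy]

theorem isAcyclic_of_adj_cover_pair {p q : V} (hpq : p ≠ q) (hnadj : ¬ G.Adj p q)
    (hcover : ∀ ⦃u v⦄, G.Adj u v → u = p ∨ u = q ∨ v = p ∨ v = q)
    (hcommon : ∀ ⦃b b'⦄, G.Adj p b → G.Adj q b → G.Adj p b' → G.Adj q b' → b = b') :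
    G.IsAcyclic := by
  refine isAcyclic_iff_forall_adj_isBridge.2 fun u v huv => ?_
  have hcover' : ∀ ⦃u v⦄, G.Adj u v → u = q ∨ u = p ∨ v = q ∨ v = p := by
    intro u v h; have := hcover h; tauto
  have hcommon' : ∀ ⦃b b'⦄, G.Adj q b → G.Adj p b → G.Adj q b' → G.Adj p b' → b = b' :=
    fun b b' h1 h2 h3 h4 => hcommon h2 h1 h4 h3
  rcases hcover huv with rfl | rfl | rfl | rfl
  · exact isBridge_of_adj_cover_pair hpq hnadj hcover hcommon huv
  · exact isBridge_of_adj_cover_pair hpq.symm (fun h => hnadj h.symm) hcover' hcommon' huv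
  · rw [Sym2.eq_swap]
    exact isBridge_of_adj_cover_pair hpq hnadj hcover hcommon huv.symm
  · rw [Sym2.eq_swap]
    exact isBridge_of_adj_cover_pair hpq.symm (fun h => hnadj h.symm) hcover' hcommon' huv.symm

theorem card_le_degree_of_forall_adj [Fintype V] [DecidableRel G.Adj] {v : V} {s : Finset V}
    (h : ∀ w ∈ s, G.Adj v w) : #s ≤ G.degree v := by
  rw [← card_neighborFinset_eq_degree]
  exact card_le_card fun w hw => (mem_neighborFinset G v w).2 (h w hw)

end SimpleGraph

theorem Fin.card_filter_val_mem_Ico {m : ℕ} (a b : ℕ) (hb : b ≤ m) :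
    #{v : Fin m | a ≤ v.val ∧ v.val < b} = b - a := by
  rw [← card_map Fin.valEmbedding, ← Nat.card_Ico]
  congr 1
  ext x
  simp only [mem_map, mem_filter, mem_univ, true_and, Fin.valEmbedding_apply, mem_Ico]
  exact ⟨by rintro ⟨v, hv, rfl⟩; exact hv, fun hx => ⟨⟨x, by omega⟩, hx, rfl⟩⟩

theorem Fin.card_filter_val_lt_half {n : ℕ} : #{v : Fin (2 * n) | v.val < n} = n := by
  rw [Fin.card_filter_val_lt]; omega

theorem Fin.card_filter_not_val_lt_half {n : ℕ} : #{v : Fin (2 * n) | ¬ v.val < n} = n := by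
  have := card_filter_add_card_filter_not (s := univ) (fun v : Fin (2 * n) => v.val < n)
  rw [Fin.card_filter_val_lt_half, card_univ, Fintype.card_fin] at this
  omega

/-- `a₁ = 0` and `a₂ = 1`; the parts are `{i | i < n}` and `{i | n ≤ i}`. -/
def splitKnnAdj (n : ℕ) (u v : Fin (2 * n)) : Prop :=
  u.val < n ∧ n ≤ v.val ∧ (u.val = 0 → n + n / 2 ≤ v.val) ∧ (u.val = 1 → v.val < n + (n + 1) / 2)

instance (n : ℕ) : DecidableRel (splitKnnAdj n) := fun _ _ => by
  unfold splitKnnAdj; infer_instance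

def splitKnn (n : ℕ) : SimpleGraph (Fin (2 * n)) where
  Adj u v := splitKnnAdj n u v ∨ splitKnnAdj n v u
  symm := ⟨fun _ _ => Or.symm⟩
  loopless := ⟨fun _ h => by rcases h with ⟨h₁, h₂, -⟩ | ⟨h₁, h₂, -⟩ <;> omega⟩

instance (n : ℕ) : DecidableRel (splitKnn n).Adj := fun u v =>
  inferInstanceAs (Decidable (splitKnnAdj n u v ∨ splitKnnAdj n v u))

namespace splitKnn

variable {n : ℕ}

theorem adj_iff {u v : Fin (2 * n)} :
    (splitKnn n).Adj u v ↔ splitKnnAdj n u v ∨ splitKnnAdj n v u := Iff.rfl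

theorem lt_iff_le_of_adj {u v : Fin (2 * n)} (h : (splitKnn n).Adj u v) :
    u.val < n ↔ n ≤ v.val := by
  rw [adj_iff, splitKnnAdj, splitKnnAdj] at h; omega

theorem adj_of_two_le {u v : Fin (2 * n)} (hu : 2 ≤ u.val) (hun : u.val < n) (hv : n ≤ v.val) :
    (splitKnn n).Adj u v := by
  rw [adj_iff, splitKnnAdj, splitKnnAdj]; omega

theorem adj_or_adj {x y b : Fin (2 * n)} (hxy : x ≠ y) (hx : x.val < n) (hy : y.val < n)
    (hb : n ≤ b.val) : (splitKnn n).Adj x b ∨ (splitKnn n).Adj y b := by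
  rw [Ne, Fin.ext_iff] at hxy
  simp only [adj_iff, splitKnnAdj]; omega

theorem degree_of_val_eq_zero {v : Fin (2 * n)} (hv : v.val = 0) :
    (splitKnn n).degree v = (n + 1) / 2 := by
  have hlt := v.isLt
  have hadj : ∀ w, (splitKnn n).Adj v w ↔ n + n / 2 ≤ w.val ∧ w.val < 2 * n := fun w => by
    simp only [adj_iff, splitKnnAdj]; omega
  rw [← card_neighborFinset_eq_degree, neighborFinset_eq_filter, filter_congr fun w _ => hadj w]
  rw [Fin.card_filter_val_mem_Ico _ _ le_rfl]; omega

theorem le_degree (hn : 2 ≤ n) (v : Fin (2 * n)) : (n + 1) / 2 ≤ (splitKnn n).degree v := by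
  have hlt := v.isLt
  obtain hv | hv | ⟨hv, hvn⟩ | hv :
      v.val = 0 ∨ v.val = 1 ∨ (2 ≤ v.val ∧ v.val < n) ∨ n ≤ v.val := by omega
  · exact (degree_of_val_eq_zero hv).ge
  · calc (n + 1) / 2 = #{w : Fin (2 * n) | n ≤ w.val ∧ w.val < n + (n + 1) / 2} := by
          rw [Fin.card_filter_val_mem_Ico _ _ (by omega)]; omega
      _ ≤ _ := card_le_degree_of_forall_adj fun w hw => by
          simp only [mem_filter, mem_univ, true_and] at hw; simp only [adj_iff, splitKnnAdj]; omega
  · calc (n + 1) / 2 ≤ #{w : Fin (2 * n) | n ≤ w.val ∧ w.val < 2 * n} := by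
          rw [Fin.card_filter_val_mem_Ico _ _ le_rfl]; omega
      _ ≤ _ := card_le_degree_of_forall_adj fun w hw => by
          simp only [mem_filter, mem_univ, true_and] at hw; exact adj_of_two_le hv hvn hw.1
  · obtain ⟨a, ha⟩ :
        ∃ a : Fin (2 * n), ∀ w : Fin (2 * n), w.val < n → w ≠ a → (splitKnn n).Adj v w := by
      by_cases h : n + n / 2 ≤ v.val
      · refine ⟨⟨1, by omega⟩, fun w hw hwa => ?_⟩
        have : w.val ≠ 1 := fun h => hwa (Fin.ext h)
        simp only [adj_iff, splitKnnAdj]; omega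
      · refine ⟨⟨0, by omega⟩, fun w hw hwa => ?_⟩
        have : w.val ≠ 0 := fun h => hwa (Fin.ext h)
        simp only [adj_iff, splitKnnAdj]; omega
    calc (n + 1) / 2 ≤ #{w : Fin (2 * n) | w.val < n} - 1 := by
          rw [Fin.card_filter_val_lt]; omega
      _ ≤ #(({w : Fin (2 * n) | w.val < n} : Finset _).erase a) := pred_card_le_card_erase
      _ ≤ _ := card_le_degree_of_forall_adj fun w hw => by
          simp only [mem_erase, mem_filter, mem_univ, true_and] at hw; exact ha w hw.2 hw.1

theorem isAcyclic_induce_lt_two_or_upper (hn : 2 ≤ n) :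
    ((splitKnn n).induce ({v : Fin (2 * n) | v.val < 2 ∨ ¬ v.val < n} : Finset _)).IsAcyclic := by
  refine isAcyclic_of_adj_cover_pair (p := ⟨⟨0, by omega⟩, by simp⟩)
    (q := ⟨⟨1, by omega⟩, by simp⟩) ?_ ?_ ?_ ?_
  · simp [Fin.ext_iff]
  · simp only [comap_adj, Function.Embedding.subtype_apply, adj_iff, splitKnnAdj]; omega
  · rintro ⟨u, hu⟩ ⟨v, hv⟩ h
    simp only [coe_filter, mem_univ, true_and, Set.mem_ofPred_eq] at hu hv
    simp only [comap_adj, Function.Embedding.subtype_apply, adj_iff, splitKnnAdj] at h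
    simp only [Subtype.mk.injEq, Fin.ext_iff]
    omega
  · rintro ⟨b, _⟩ ⟨b', _⟩ h₁ h₂ h₃ h₄
    simp only [comap_adj, Function.Embedding.subtype_apply, adj_iff, splitKnnAdj,
      true_implies] at h₁ h₂ h₃ h₄
    simp only [Subtype.mk.injEq, Fin.ext_iff]
    omega

theorem card_le_of_isAcyclic_induce {S : Finset (Fin (2 * n))}
    (hS : ((splitKnn n).induce (S : Set (Fin (2 * n)))).IsAcyclic) : #S ≤ n + 2 := by
  set L := {v ∈ S | v.val < n}
  set H := {v ∈ S | ¬ v.val < n}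
  have hL : #L ≤ n :=
    (card_le_card (filter_subset_filter _ (subset_univ S))).trans_eq Fin.card_filter_val_lt_half
  have hH : #H ≤ n :=
    (card_le_card (filter_subset_filter _ (subset_univ S))).trans_eq Fin.card_filter_not_val_lt_half
  have hHL : 3 ≤ #L → #H ≤ 2 := by
    intro hL3
    obtain ⟨w, hwL, hw⟩ : ∃ w ∈ L, 2 ≤ w.val := by
      by_contra! h
      have := card_le_card fun v (hv : v ∈ L) => mem_filter.2 ⟨mem_univ v, h v hv⟩
      rw [Fin.card_filter_val_lt] at this
      omega
    obtain ⟨x, hx, y, hy, hxy⟩ :=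
      one_lt_card.1 (by rw [card_erase_of_mem hwL]; omega : 1 < #(L.erase w))
    simp only [L, mem_erase, mem_filter] at hx hy hwL
    calc #H ≤ #({b ∈ S | (splitKnn n).Adj x b ∧ (splitKnn n).Adj w b} ∪
            {b ∈ S | (splitKnn n).Adj y b ∧ (splitKnn n).Adj w b}) := by
          refine card_le_card fun b hb => ?_
          simp only [H, mem_filter, not_lt] at hb
          have hwb := adj_of_two_le hw hwL.2 hb.2
          rcases adj_or_adj hxy hx.2.2 hy.2.2 hb.2 with h | h
          · exact mem_union_left _ (mem_filter.2 ⟨hb.1, h, hwb⟩)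
          · exact mem_union_right _ (mem_filter.2 ⟨hb.1, h, hwb⟩)
      _ ≤ 1 + 1 := (card_union_le _ _).trans <| add_le_add
          (hS.card_filter_adj_adj_le_one hx.2.1 hwL.1 hx.1)
          (hS.card_filter_adj_adj_le_one hy.2.1 hwL.1 hy.1)
  have : #L + #H = #S := card_filter_add_card_filter_not _
  omega

end splitKnn

theorem stmt3 (n : ℕ) (hn : 2 ≤ n) :
    ∃ (G : SimpleGraph (Fin (2 * n))) (_ : DecidableRel G.Adj)
      (V1 V2 : Finset (Fin (2 * n))),
      Disjoint V1 V2 ∧ V1 ∪ V2 = Finset.univ ∧ V1.card = n ∧ V2.card = n ∧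
      (∀ u v, G.Adj u v → (u ∈ V1 ∧ v ∈ V2) ∨ (u ∈ V2 ∧ v ∈ V1)) ∧
      (∀ v, (n + 1) / 2 ≤ G.degree v) ∧ (∃ v, G.degree v = (n + 1) / 2) ∧
      forestNum G = n + 2 := by
  let V1 : Finset (Fin (2 * n)) := {v | v.val < n}
  refine ⟨splitKnn n, inferInstance, V1, V1ᶜ, disjoint_compl_right,
    union_compl _, Fin.card_filter_val_lt_half, ?_, ?_, splitKnn.le_degree hn,
    ⟨⟨0, by omega⟩, splitKnn.degree_of_val_eq_zero rfl⟩, ?_⟩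
  · rw [card_compl, Fin.card_filter_val_lt_half, Fintype.card_fin]; omega
  · intro u v h
    have := splitKnn.lt_iff_le_of_adj h
    simp only [V1, mem_compl, mem_filter, mem_univ, true_and]
    omega
  · refine forestNum_eq _ ?_ (splitKnn.isAcyclic_induce_lt_two_or_upper hn)
      fun _ => splitKnn.card_le_of_isAcyclic_induce
    rw [filter_or, card_union_of_disjoint, Fin.card_filter_val_lt, Fin.card_filter_not_val_lt_half]
    · omega
    · exact disjoint_filter.2 fun v _ h₁ h₂ => by omega
end

section
/- Let B be a balanced bipartite graph with parts V1, V2 of size n each and minimum degree at least n/2 + 1. If S is a subset of vertices with |S| = n + 1 such that B[S] is a forest, then min(|S ∩ V1|, |S ∩ V2|) ∈ {1, 2, n/2}. -/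
/-!
Let `a = |S ∩ V₁| ≤ |S ∩ V₂| = b`, so `a + b = n + 1`. A vertex of `S ∩ V₁` has all its neighbours
in `V₂`, and only `n - b = a - 1` of them can lie outside `S`; hence it has at least
`(n + 4 - 2a) / 2` neighbours inside the forest `G[S]`. Summing over `S ∩ V₁` counts every edge of
`G[S]` once, and a forest on `n + 1` vertices has at most `n` edges, so `a (n + 4 - 2a) ≤ 2n`.
For `3 ≤ a < n / 2` this fails, and for `2a = n + 1` the integral bound gives at least `2a = n + 1`
edges, which is too many.
-/

open Finset SimpleGraph

theorem eq_one_or_eq_two_or_two_mul_eq_of_mul_le {a n d : ℕ} (ha : 1 ≤ a) (han : 2 * a ≤ n + 1)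
    (hd : n + 4 ≤ 2 * d + 2 * a) (had : a * d ≤ n) : a = 1 ∨ a = 2 ∨ 2 * a = n := by
  by_contra! h
  obtain ⟨ha₁, ha₂, ha₃⟩ := h
  rcases (show 2 * a = n + 1 ∨ 2 * a < n by omega) with hodd | hlt
  · have : 2 ≤ d := by omega
    nlinarith
  · have : 3 ≤ a := by omega
    -- `a (n + 4) ≤ 2ad + 2a² ≤ 2n + 2a²` says `(a - 2)(n - 2a) ≤ 0`.
    nlinarith [Nat.mul_le_mul_left a hd]

namespace SimpleGraph

variable {V : Type*} [Fintype V] {G : SimpleGraph V}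

theorem IsAcyclic.card_edgeFinset_add_one_le [Nonempty V] [DecidableRel G.Adj]
    (hG : G.IsAcyclic) : #G.edgeFinset + 1 ≤ Fintype.card V := by
  classical
  obtain ⟨T, hGT, -, hT⟩ := connected_top.exists_isTree_le_of_le_of_isAcyclic le_top hG
  rw [← hT.card_edgeFinset]
  gcongr

variable [DecidableEq V] [DecidableRel G.Adj]

theorem degree_le_card_neighborFinset_inter_add_card_sdiff {v : V} {S T : Finset V}
    (hT : G.neighborFinset v ⊆ T) : G.degree v ≤ #(G.neighborFinset v ∩ S) + #(T \ S) := by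
  have hsub : G.neighborFinset v ⊆ (G.neighborFinset v ∩ S) ∪ (T \ S) := fun u hu => by
    by_cases huS : u ∈ S
    · exact mem_union_left _ (mem_inter.2 ⟨hu, huS⟩)
    · exact mem_union_right _ (mem_sdiff.2 ⟨hT hu, huS⟩)
  rw [← card_neighborFinset_eq_degree]
  exact (card_le_card hsub).trans (card_union_le _ _)

theorem degree_induce_eq_card_neighborFinset_inter (S : Finset V) (x : (S : Set V)) :
    (G.induce (S : Set V)).degree x = #(G.neighborFinset x ∩ S) := by
  have := congrArg card (map_neighborFinset_induce (G := G) (s := (S : Set V)) x)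
  rw [card_map, card_neighborFinset_eq_degree, Finset.toFinset_coe] at this
  convert this

-- The left side counts the edges of the forest `G[S]`, each of which has exactly one end in `V₁`.
theorem IsBipartiteWith.sum_card_neighborFinset_inter_add_one_le {V₁ V₂ S : Finset V}
    (hG : G.IsBipartiteWith V₁ V₂) (hS : S.Nonempty) (hacyc : (G.induce (S : Set V)).IsAcyclic) :
    ∑ v ∈ S ∩ V₁, #(G.neighborFinset v ∩ S) + 1 ≤ #S := by
  have hH : (G.induce (S : Set V)).IsBipartiteWith
      ↑({x | x.1 ∈ V₁} : Finset (S : Set V)) ↑({x | x.1 ∈ V₂} : Finset (S : Set V)) := by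
    refine ⟨?_, fun x y hxy => ?_⟩
    · rw [disjoint_coe, disjoint_filter]
      exact fun x _ h₁ h₂ => Finset.disjoint_left.1 (disjoint_coe.1 hG.disjoint) h₁ h₂
    · simpa using hG.mem_of_adj hxy
  have := hS.to_set.to_subtype
  have hforest := hacyc.card_edgeFinset_add_one_le
  rw [← isBipartiteWith_sum_degrees_eq_card_edges hH] at hforest
  simp only [degree_induce_eq_card_neighborFinset_inter] at hforest
  simp only [coe_sort_coe, Fintype.card_coe] at hforest
  convert hforest using 2
  rw [sum_filter, sum_coe_sort S (fun v => if v ∈ V₁ then #(G.neighborFinset v ∩ S) else 0),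
    ← sum_filter, filter_mem_eq_inter]

theorem IsBipartiteWith.card_inter_eq_one_or_two_or_half {V₁ V₂ S : Finset V} {n : ℕ}
    (hG : G.IsBipartiteWith V₁ V₂) (hcover : S ⊆ V₁ ∪ V₂) (hV₂ : #V₂ = n)
    (hdeg : ∀ v ∈ V₁, n + 2 ≤ 2 * G.degree v) (hS : #S = n + 1)
    (hacyc : (G.induce (S : Set V)).IsAcyclic) (hle : #(S ∩ V₁) ≤ #(S ∩ V₂)) :
    #(S ∩ V₁) = 1 ∨ #(S ∩ V₁) = 2 ∨ 2 * #(S ∩ V₁) = n := by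
  have hsplit : #(S ∩ V₁) + #(S ∩ V₂) = n + 1 := by
    rw [← card_union_of_disjoint (disjoint_coe.1 hG.disjoint |>.mono inter_subset_right
      inter_subset_right), ← inter_union_distrib_left, inter_eq_left.2 hcover, hS]
  have hb : #(S ∩ V₂) ≤ n := hV₂ ▸ card_le_card inter_subset_right
  have hA : (S ∩ V₁).Nonempty := card_pos.1 (by omega)
  have hlocal : ∀ v ∈ S ∩ V₁, n + 4 ≤ 2 * #(G.neighborFinset v ∩ S) + 2 * #(S ∩ V₁) := by
    intro v hv
    have hout : #(V₂ \ S) = n - #(S ∩ V₂) := by rw [card_sdiff, hV₂]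
    have := degree_le_card_neighborFinset_inter_add_card_sdiff (S := S)
      (isBipartiteWith_neighborFinset_subset hG (mem_inter.1 hv).2)
    have := hdeg v (mem_inter.1 hv).2
    omega
  obtain ⟨v₀, hv₀, hmin⟩ := (S ∩ V₁).exists_min_image (fun v => #(G.neighborFinset v ∩ S)) hA
  have hsum : #(S ∩ V₁) * #(G.neighborFinset v₀ ∩ S) ≤ n := by
    have := hG.sum_card_neighborFinset_inter_add_one_le (hA.mono inter_subset_left) hacyc
    have := card_nsmul_le_sum _ _ _ hmin
    rw [smul_eq_mul] at this
    omega
  exact eq_one_or_eq_two_or_two_mul_eq_of_mul_le (card_pos.2 hA) (by omega) (hlocal v₀ hv₀) hsum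

end SimpleGraph

theorem stmt4 {V : Type} [Fintype V] [DecidableEq V] (G : SimpleGraph V)
    [DecidableRel G.Adj] (n : ℕ) (V1 V2 : Finset V)
    (hdisj : Disjoint V1 V2) (hunion : V1 ∪ V2 = Finset.univ)
    (hc1 : V1.card = n) (hc2 : V2.card = n)
    (hbip : ∀ u v, G.Adj u v → (u ∈ V1 ∧ v ∈ V2) ∨ (u ∈ V2 ∧ v ∈ V1))
    (hdeg : ∀ v, n + 2 ≤ 2 * G.degree v)
    (S : Finset V) (hS : S.card = n + 1)
    (hforest : (G.induce (S : Set V)).IsAcyclic) :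
    min (S ∩ V1).card (S ∩ V2).card = 1 ∨
      min (S ∩ V1).card (S ∩ V2).card = 2 ∨
      2 * min (S ∩ V1).card (S ∩ V2).card = n := by
  have hG : G.IsBipartiteWith V1 V2 :=
    ⟨disjoint_coe.2 hdisj, fun u v h => by simpa using hbip u v h⟩
  have hcover : S ⊆ V1 ∪ V2 := hunion ▸ subset_univ S
  rcases le_total #(S ∩ V1) #(S ∩ V2) with hle | hle
  · rw [min_eq_left hle]
    exact hG.card_inter_eq_one_or_two_or_half hcover hc2 (fun v _ => hdeg v) hS hforest hle
  · rw [min_eq_right hle]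
    exact hG.symm.card_inter_eq_one_or_two_or_half (union_comm V1 V2 ▸ hcover) hc1
      (fun v _ => hdeg v) hS hforest hle
end

section
/- Let B be a balanced bipartite graph with parts V1, V2 of size n each and minimum degree at least n/2 + 1. If S is a vertex subset with |S| = n + 1, B[S] a forest, and min(|S ∩ V1|, |S ∩ V2|) = 2, then n is even. -/
open Finset SimpleGraph

lemma aux6 {V : Type} [Fintype V] [DecidableEq V] (G : SimpleGraph V)
    [DecidableRel G.Adj] (k : ℕ) (A B : Finset V)
    (hdisj : Disjoint A B)
    (hcB : B.card = 2 * k + 1)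
    (hbip : ∀ u v, G.Adj u v → (u ∈ A ∧ v ∈ B) ∨ (u ∈ B ∧ v ∈ A))
    (hdeg : ∀ v, 2 * k + 3 ≤ 2 * G.degree v)
    (S : Finset V)
    (hforest : (G.induce (S : Set V)).IsAcyclic)
    (hA2 : (S ∩ A).card = 2) (hB2 : (S ∩ B).card = 2 * k) : False := by
  obtain ⟨a, ha, b, hb, hab⟩ := Finset.one_lt_card.mp (by omega : 1 < (S ∩ A).card)
  have hBS : (B \ (S ∩ B)).card = 1 := by
    rw [Finset.card_sdiff_of_subset Finset.inter_subset_right]; omega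
  have key : ∀ x ∈ S ∩ A, k + 1 ≤ (G.neighborFinset x ∩ (S ∩ B)).card := by
    intro x hx
    have hxA : x ∈ A := (Finset.mem_inter.mp hx).2
    have h1 : G.neighborFinset x ⊆ B := by
      intro v hv
      rw [mem_neighborFinset] at hv
      rcases hbip x v hv with ⟨_, h⟩ | ⟨h, _⟩
      · exact h
      · exact absurd h (Finset.disjoint_left.mp hdisj hxA)
    have h2 : G.neighborFinset x =
        (G.neighborFinset x ∩ (S ∩ B)) ∪ (G.neighborFinset x ∩ (B \ (S ∩ B))) := by
      rw [← Finset.inter_union_distrib_left,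
        Finset.union_sdiff_of_subset Finset.inter_subset_right,
        Finset.inter_eq_left.mpr h1]
    have h3 := Finset.card_union_le (G.neighborFinset x ∩ (S ∩ B))
      (G.neighborFinset x ∩ (B \ (S ∩ B)))
    rw [← h2] at h3
    have h4 : (G.neighborFinset x ∩ (B \ (S ∩ B))).card ≤ 1 :=
      le_trans (Finset.card_le_card Finset.inter_subset_right) hBS.le
    have h5 : G.degree x = (G.neighborFinset x).card :=
      (card_neighborFinset_eq_degree G x).symm
    have := hdeg x
    omega
  have hunion : ((G.neighborFinset a ∩ (S ∩ B)) ∪ (G.neighborFinset b ∩ (S ∩ B))).card ≤ 2 * k := by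
    refine le_trans (Finset.card_le_card ?_) hB2.le
    exact Finset.union_subset Finset.inter_subset_right Finset.inter_subset_right
  have hint : 2 ≤ ((G.neighborFinset a ∩ (S ∩ B)) ∩ (G.neighborFinset b ∩ (S ∩ B))).card := by
    have := Finset.card_union_add_card_inter (G.neighborFinset a ∩ (S ∩ B))
      (G.neighborFinset b ∩ (S ∩ B))
    have ka := key a ha
    have kb := key b hb
    omega
  obtain ⟨c, hc, d, hd, hcd⟩ := Finset.one_lt_card.mp hint
  have haS : a ∈ S := (Finset.mem_inter.mp ha).1
  have hbS : b ∈ S := (Finset.mem_inter.mp hb).1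
  have hcS : c ∈ S := (Finset.mem_inter.mp (Finset.mem_inter.mp (Finset.mem_inter.mp hc).1).2).1
  have hdS : d ∈ S := (Finset.mem_inter.mp (Finset.mem_inter.mp (Finset.mem_inter.mp hd).1).2).1
  have hcB' : c ∈ B := (Finset.mem_inter.mp (Finset.mem_inter.mp (Finset.mem_inter.mp hc).1).2).2
  have hdB' : d ∈ B := (Finset.mem_inter.mp (Finset.mem_inter.mp (Finset.mem_inter.mp hd).1).2).2
  have haA : a ∈ A := (Finset.mem_inter.mp ha).2
  have hbA : b ∈ A := (Finset.mem_inter.mp hb).2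
  have hac : G.Adj a c := (mem_neighborFinset G a c).mp (Finset.mem_inter.mp (Finset.mem_inter.mp hc).1).1
  have hbc : G.Adj b c := (mem_neighborFinset G b c).mp (Finset.mem_inter.mp (Finset.mem_inter.mp hc).2).1
  have had : G.Adj a d := (mem_neighborFinset G a d).mp (Finset.mem_inter.mp (Finset.mem_inter.mp hd).1).1
  have hbd : G.Adj b d := (mem_neighborFinset G b d).mp (Finset.mem_inter.mp (Finset.mem_inter.mp hd).2).1
  -- build two paths in the induced graph
  set H := G.induce (S : Set V) with hH
  let a' : (S : Set V) := ⟨a, haS⟩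
  let b' : (S : Set V) := ⟨b, hbS⟩
  let c' : (S : Set V) := ⟨c, hcS⟩
  let d' : (S : Set V) := ⟨d, hdS⟩
  have hAdj : ∀ (u v : (S : Set V)), G.Adj u v → H.Adj u v := fun u v h => h
  have hnac : a ≠ c := fun h => absurd hcB' (Finset.disjoint_left.mp hdisj (h ▸ haA))
  have hnad : a ≠ d := fun h => absurd hdB' (Finset.disjoint_left.mp hdisj (h ▸ haA))
  have hnbc : b ≠ c := fun h => absurd hcB' (Finset.disjoint_left.mp hdisj (h ▸ hbA))
  have hnbd : b ≠ d := fun h => absurd hdB' (Finset.disjoint_left.mp hdisj (h ▸ hbA))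
  let p1 : H.Walk a' b' := .cons (hAdj a' c' hac) (.cons (hAdj c' b' hbc.symm) .nil)
  let p2 : H.Walk a' b' := .cons (hAdj a' d' had) (.cons (hAdj d' b' hbd.symm) .nil)
  have hp1 : p1.IsPath := by
    rw [SimpleGraph.Walk.isPath_def]
    simp [p1, Walk.support_cons, a', b', c', List.Nodup]
    exact ⟨⟨hnac, hab⟩, hnbc.symm⟩
  have hp2 : p2.IsPath := by
    rw [SimpleGraph.Walk.isPath_def]
    simp [p2, Walk.support_cons, a', b', d', List.Nodup]
    exact ⟨⟨hnad, hab⟩, hnbd.symm⟩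
  have := hforest.path_unique ⟨p1, hp1⟩ ⟨p2, hp2⟩
  have hw : p1 = p2 := congrArg Subtype.val this
  have : p1.support = p2.support := congrArg Walk.support hw
  simp only [p1, p2, Walk.support_cons, Walk.support_nil] at this
  rw [List.cons.injEq, List.cons.injEq] at this
  exact hcd (congrArg Subtype.val this.2.1)

theorem stmt6 {V : Type} [Fintype V] [DecidableEq V] (G : SimpleGraph V)
    [DecidableRel G.Adj] (n : ℕ) (V1 V2 : Finset V)
    (hdisj : Disjoint V1 V2) (hunion : V1 ∪ V2 = Finset.univ)
    (hc1 : V1.card = n) (hc2 : V2.card = n)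
    (hbip : ∀ u v, G.Adj u v → (u ∈ V1 ∧ v ∈ V2) ∨ (u ∈ V2 ∧ v ∈ V1))
    (hdeg : ∀ v, n + 2 ≤ 2 * G.degree v)
    (S : Finset V) (hS : S.card = n + 1)
    (hforest : (G.induce (S : Set V)).IsAcyclic)
    (hmin : min (S ∩ V1).card (S ∩ V2).card = 2) :
    Even n := by
  by_contra hodd
  obtain ⟨k, hk⟩ := Nat.not_even_iff_odd.mp hodd
  subst hk
  have hScard : (S ∩ V1).card + (S ∩ V2).card = 2 * k + 1 + 1 := by
    rw [← hS, ← Finset.card_union_of_disjoint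
      (Finset.disjoint_of_subset_left Finset.inter_subset_right
        (Finset.disjoint_of_subset_right Finset.inter_subset_right hdisj))]
    congr 1
    rw [← Finset.inter_union_distrib_left, hunion, Finset.inter_univ]
  rcases min_cases (S ∩ V1).card (S ∩ V2).card with ⟨h1, _⟩ | ⟨h2, _⟩ <;> rw [hmin] at *
  · exact aux6 G k V1 V2 hdisj hc2 hbip (fun v => by have := hdeg v; omega)
      S hforest (by omega) (by omega)
  · exact aux6 G k V2 V1 hdisj.symm hc1
      (fun u v h => (hbip u v h).symm) (fun v => by have := hdeg v; omega)
      S hforest (by omega) (by omega)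
end

section
/- For every even n ≥ 4 there exists a balanced bipartite graph B on 2n vertices with minimum degree at least n/2 + 1 and a vertex subset S with |S| = n + 1 such that B[S] is a forest and min(|S ∩ V1|, |S ∩ V2|) = 2. -/
/-!
Take `A = {a₁, a₂}` and `F` on one side, `h` and `B'` on the other, with `F` complete to the
second side, `h` complete to the first side, and `a₁`, `a₂` joined to two halves of `B'` that
overlap in a single vertex. Then every degree is at least `n/2 + 1`, and in `S = A ∪ B'` every
edge meets `A` while `a₁`, `a₂` have exactly one common neighbour, so `S` induces a tree.
-/

open Finset SimpleGraph

namespace SimpleGraph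

variable {V : Type*} {G : SimpleGraph V} {x y : V}

theorem Walk.IsCycle.mem_commonNeighbors {u : V} {c : G.Walk u u} (hc : c.IsCycle)
    (hedge : ∀ ⦃v w⦄, G.Adj v w → v ≠ x → v ≠ y → w = x ∨ w = y) (hux : u ≠ x) (huy : u ≠ y) :
    u ∈ G.commonNeighbors x y := by
  have hsnd := c.adj_snd hc.not_nil
  have hpen := c.adj_penultimate hc.not_nil
  have hne := hc.snd_ne_penultimate
  rw [SimpleGraph.mem_commonNeighbors]
  rcases hedge hsnd hux huy with hs | hs <;> rcases hedge hpen.symm hux huy with hp | hp <;>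
    grind [adj_comm]

theorem isAcyclic_of_subsingleton_commonNeighbors (hxy : ¬G.Adj x y)
    (hedge : ∀ ⦃v w⦄, G.Adj v w → v ≠ x → v ≠ y → w = x ∨ w = y)
    (hcommon : (G.commonNeighbors x y).Subsingleton) : G.IsAcyclic := by
  have off_pair : ∀ ⦃v w⦄, G.Adj v w → v = x ∨ v = y → w ≠ x ∧ w ≠ y := by
    rintro v w h (rfl | rfl)
    · exact ⟨h.ne', fun hw => hxy (hw ▸ h)⟩
    · exact ⟨fun hw => hxy (hw ▸ h).symm, h.ne'⟩
  intro v c hc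
  obtain ⟨u, hu, hux, huy⟩ : ∃ u ∈ c.support, u ≠ x ∧ u ≠ y := by
    by_cases hv : v = x ∨ v = y
    · exact ⟨c.snd, c.getVert_mem_support 1, off_pair (c.adj_snd hc.not_nil) hv⟩
    · push Not at hv
      exact ⟨v, c.start_mem_support, hv⟩
  classical
  -- Two steps after `u` the cycle reaches a second vertex outside `{x, y}`,
  -- and both are common neighbours of `x` and `y`.
  set d := c.rotate u hu
  have hd : d.IsCycle := hc.rotate hu
  have hlen := hd.three_le_length
  have hsnd : d.getVert 1 = x ∨ d.getVert 1 = y := by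
    simpa using hedge (d.adj_getVert_succ (i := 0) (by omega)) (by simpa using hux)
      (by simpa using huy)
  have hw := off_pair (d.adj_getVert_succ (i := 1) (by omega)) hsnd
  have hwu : d.getVert 2 ≠ u := by
    simpa [eq_comm] using hd.getVert_sub_one_ne_getVert_add_one (i := 1) (by omega)
  exact hwu (hcommon ((hd.rotate (d.getVert_mem_support 2)).mem_commonNeighbors hedge hw.1 hw.2)
    (hd.mem_commonNeighbors hedge hux huy))

theorem card_le_degree_of_forall_adj_s9 {m : ℕ} {G : SimpleGraph (Fin m)} [DecidableRel G.Adj]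
    (v : Fin m) (s : Finset ℕ) (hs : ∀ k ∈ s, k < m)
    (hadj : ∀ k (hk : k ∈ s), G.Adj v ⟨k, hs k hk⟩) : #s ≤ G.degree v := by
  rw [← card_neighborFinset_eq_degree, ← card_attachFin s hs]
  refine card_le_card fun w hw => ?_
  rw [mem_attachFin] at hw
  simpa using hadj w hw

end SimpleGraph

theorem Fin.card_filter_val_mem {m : ℕ} (s : Finset ℕ) (hs : ∀ k ∈ s, k < m) :
    #{v : Fin m | v.val ∈ s} = #s := by
  rw [← card_attachFin s hs]
  congr 1
  ext
  simp

namespace ForestConstruction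

/- Vertex `i < n` is `a₁, a₂` for `i = 0, 1` and lies in `F` for `i ≥ 2`; vertex `n + j` is `h`
for `j = 0` and lies in `B'` for `j ≥ 1`. `crossAdj n i j` says that `i` and `n + j` are
adjacent; `a₁` and `a₂` share the neighbour `n + n / 2`. -/
def crossAdj (n i j : ℕ) : Prop :=
  2 ≤ i ∨ j = 0 ∨ (i = 0 ∧ j ≤ n / 2) ∨ (i = 1 ∧ n / 2 ≤ j)

instance (n i j : ℕ) : Decidable (crossAdj n i j) := by unfold crossAdj; infer_instance

def graph (n : ℕ) : SimpleGraph (Fin (2 * n)) where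
  Adj u v := (u < n ∧ n ≤ v ∧ crossAdj n u (v - n)) ∨ (v < n ∧ n ≤ u ∧ crossAdj n v (u - n))
  symm := ⟨fun _ _ => Or.symm⟩
  loopless := ⟨fun _ h => by omega⟩

instance (n : ℕ) : DecidableRel (graph n).Adj := fun _ _ => by unfold graph; infer_instance

def part₁ (n : ℕ) : Finset (Fin (2 * n)) := {v | v < n}

def part₂ (n : ℕ) : Finset (Fin (2 * n)) := {v | n ≤ v}

def forestSet (n : ℕ) : Finset (Fin (2 * n)) := {v | v.val < 2 ∨ n + 1 ≤ v.val}

variable {n : ℕ}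

theorem card_part₁ : #(part₁ n) = n := by
  simpa [part₁] using Fin.card_filter_val_mem (m := 2 * n) (range n) (by simp; omega)

theorem card_part₂ : #(part₂ n) = n := by
  have := Fin.card_filter_val_mem (m := 2 * n) (Ico n (2 * n)) (by simp)
  simp only [mem_Ico, Fin.is_lt, and_true, Nat.card_Ico] at this
  rw [part₂, this]
  omega

theorem card_forestSet (hn : 1 ≤ n) : #(forestSet n) = n + 1 := by
  have := Fin.card_filter_val_mem (m := 2 * n) (range 2 ∪ Ico (n + 1) (2 * n)) (by simp; omega)
  rw [card_union_of_disjoint (disjoint_left.2 fun k hk hk' => by simp at hk hk'; omega)] at this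
  simp [forestSet] at this ⊢
  omega

theorem card_forestSet_inter_part₁ (hn : 2 ≤ n) : #(forestSet n ∩ part₁ n) = 2 := by
  have : forestSet n ∩ part₁ n = ({v | v.val < 2} : Finset (Fin (2 * n))) := by
    ext
    simp [forestSet, part₁]
    omega
  rw [this, Fin.card_filter_val_lt]
  omega

theorem card_forestSet_inter_part₂ (hn : 2 ≤ n) : #(forestSet n ∩ part₂ n) = n - 1 := by
  have : forestSet n ∩ part₂ n =
      ({v | v.val ∈ Ico (n + 1) (2 * n)} : Finset (Fin (2 * n))) := by
    ext
    simp [forestSet, part₂]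
    omega
  rw [this, Fin.card_filter_val_mem _ (by simp), Nat.card_Ico]
  omega

theorem graph_adj_mem_parts {u v : Fin (2 * n)} (h : (graph n).Adj u v) :
    (u ∈ part₁ n ∧ v ∈ part₂ n) ∨ (u ∈ part₂ n ∧ v ∈ part₁ n) := by
  simp only [graph, part₁, part₂, mem_filter, mem_univ, true_and] at h ⊢
  omega

theorem add_two_le_two_mul_degree (hn : 4 ≤ n) (heven : Even n) (v : Fin (2 * n)) :
    n + 2 ≤ 2 * (graph n).degree v := by
  suffices ∃ (s : Finset ℕ) (hs : ∀ k ∈ s, k < 2 * n),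
      (∀ k (hk : k ∈ s), (graph n).Adj v ⟨k, hs k hk⟩) ∧ n + 2 ≤ 2 * #s by
    obtain ⟨s, hs, hadj, hcard⟩ := this
    exact hcard.trans (Nat.mul_le_mul_left 2 (card_le_degree_of_forall_adj_s9 v s hs hadj))
  have hhalf : n / 2 * 2 = n := Nat.div_mul_cancel (even_iff_two_dvd.mp heven)
  rcases (show v.val = 0 ∨ v.val = 1 ∨ (2 ≤ v.val ∧ v.val < n) ∨ v.val = n ∨
      (n < v.val ∧ v.val ≤ n + n / 2) ∨ n + n / 2 < v.val by omega) with h | h | h | h | h | h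
  · refine ⟨Icc n (n + n / 2), fun k hk => by simp at hk; omega, fun k hk => ?_, by simp; omega⟩
    simp [graph, crossAdj] at hk ⊢
    omega
  · refine ⟨insert n (Icc (n + n / 2) (2 * n - 1)), fun k hk => by simp at hk; omega,
      fun k hk => ?_, ?_⟩
    · simp [graph, crossAdj] at hk ⊢
      omega
    · rw [card_insert_of_notMem (by simp; omega), Nat.card_Icc]
      omega
  · refine ⟨Ico n (2 * n), fun k hk => by simp at hk; omega, fun k hk => ?_, by simp; omega⟩
    simp [graph, crossAdj] at hk ⊢
    omega
  · refine ⟨range n, fun k hk => by simp at hk; omega, fun k hk => ?_, by simp; omega⟩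
    simp [graph, crossAdj] at hk ⊢
    omega
  · refine ⟨(range n).erase 1, fun k hk => by simp at hk; omega, fun k hk => ?_, ?_⟩
    · simp [graph, crossAdj] at hk ⊢
      omega
    · rw [card_erase_of_mem (by simp; omega), card_range]
      omega
  · refine ⟨(range n).erase 0, fun k hk => by simp at hk; omega, fun k hk => ?_, ?_⟩
    · simp [graph, crossAdj] at hk ⊢
      omega
    · rw [card_erase_of_mem (by simp; omega), card_range]
      omega

theorem isAcyclic_induce_forestSet (hn : 2 ≤ n) :
    ((graph n).induce (forestSet n : Set (Fin (2 * n)))).IsAcyclic := by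
  have h₀ : (⟨0, by omega⟩ : Fin (2 * n)) ∈ (forestSet n : Set (Fin (2 * n))) := by
    simp [forestSet]
  have h₁ : (⟨1, by omega⟩ : Fin (2 * n)) ∈ (forestSet n : Set (Fin (2 * n))) := by
    simp [forestSet]
  refine isAcyclic_of_subsingleton_commonNeighbors (x := ⟨_, h₀⟩) (y := ⟨_, h₁⟩) ?_ ?_ ?_
  · simp [graph, crossAdj]
    omega
  · rintro ⟨u, hu⟩ ⟨w, hw⟩ h hux huy
    simp [forestSet, graph, Subtype.ext_iff, Fin.ext_iff] at hu hw h hux huy ⊢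
    omega
  · rintro ⟨b, hb⟩ hb' ⟨c, hc⟩ hc'
    rw [SimpleGraph.mem_commonNeighbors] at hb' hc'
    simp [forestSet, graph, crossAdj, Subtype.ext_iff, Fin.ext_iff] at hb hc hb' hc' ⊢
    omega

end ForestConstruction

theorem stmt9 (n : ℕ) (hn : 4 ≤ n) (heven : Even n) :
    ∃ (G : SimpleGraph (Fin (2 * n))) (_ : DecidableRel G.Adj)
      (V1 V2 : Finset (Fin (2 * n))),
      Disjoint V1 V2 ∧ V1 ∪ V2 = Finset.univ ∧ V1.card = n ∧ V2.card = n ∧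
      (∀ u v, G.Adj u v → (u ∈ V1 ∧ v ∈ V2) ∨ (u ∈ V2 ∧ v ∈ V1)) ∧
      (∀ v, n + 2 ≤ 2 * G.degree v) ∧
      ∃ S : Finset (Fin (2 * n)), S.card = n + 1 ∧
        (G.induce (S : Set (Fin (2 * n)))).IsAcyclic ∧
        min (S ∩ V1).card (S ∩ V2).card = 2 := by
  open ForestConstruction in
  refine ⟨graph n, inferInstance, part₁ n, part₂ n, ?_, ?_, card_part₁, card_part₂,
    fun _ _ => graph_adj_mem_parts, add_two_le_two_mul_degree hn heven, forestSet n,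
    card_forestSet (by omega), isAcyclic_induce_forestSet (by omega), ?_⟩
  · exact disjoint_filter.2 fun _ _ h h' => by omega
  · ext
    simp [ForestConstruction.part₁, ForestConstruction.part₂]
    omega
  · rw [ForestConstruction.card_forestSet_inter_part₁ (by omega),
      ForestConstruction.card_forestSet_inter_part₂ (by omega)]
    omega
end

section
/- For every even n ≥ 4 there exists a balanced bipartite graph B on 2n vertices with minimum degree at least n/2 + 1 and a vertex subset S with |S| = n + 1 such that B[S] is a forest and min(|S ∩ V1|, |S ∩ V2|) = n/2. -/
/-!
Take `Y` complete. Every vertex of `A` has two path neighbours and is joined to all of `H`;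
every vertex of `B'` has a path neighbour and is joined to all of `F`; the vertices of `F` and `H`
see the whole opposite side. This gives minimum degree `n/2 + 1`. Inside `S = A ∪ B'` only path
edges survive, and numbering the path `0, 1, …, n` in order embeds `B[S]` into the Hasse diagram
of `ℕ`, which is acyclic because the largest vertex of a cycle would have two distinct
predecessors.
-/

open Finset SimpleGraph

theorem SimpleGraph.isAcyclic_hasse {α : Type*} [LinearOrder α] : (hasse α).IsAcyclic := by
  intro v c hc
  obtain ⟨x, hx, hmax⟩ := c.support.toFinset.exists_max_image id ⟨v, by simp⟩
  rw [List.mem_toFinset] at hx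
  set c' := c.rotate x hx
  have hc' : c'.IsCycle := hc.rotate hx
  have covBy_of_adj : ∀ y ∈ c'.support, (hasse α).Adj x y → y ⋖ x := by
    intro y hy hxy
    have : y ≤ x := hmax y (by simpa [c', Walk.mem_support_rotate_iff] using hy)
    rw [hasse_adj] at hxy
    exact hxy.resolve_left fun h => h.lt.not_ge this
  exact hc'.snd_ne_penultimate <|
    (covBy_of_adj _ (c'.getVert_mem_support _) (c'.adj_snd hc'.not_nil)).unique_left
      (covBy_of_adj _ (c'.getVert_mem_support _) (c'.adj_penultimate hc'.not_nil).symm)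

theorem Fin.card_filter_val (N : ℕ) (p : ℕ → Prop) [DecidablePred p] :
    #{i : Fin N | p i} = #{k ∈ Iio N | p k} := by
  rw [← Fin.map_valEmbedding_univ, filter_map, card_map]
  rfl

theorem Fin.card_filter_eq_sub {N a b : ℕ} (hb : b ≤ N) (p : Fin N → Prop) [DecidablePred p]
    (hp : ∀ i, p i ↔ a ≤ i ∧ i < b) : #{i | p i} = b - a := by
  rw [filter_congr fun i _ => hp i, Fin.card_filter_val _ fun k => a ≤ k ∧ k < b,
    ← Nat.card_Ico]
  congr 1
  ext k
  simp only [mem_filter, mem_Iio, mem_Ico]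
  omega

namespace PathJoin

/-- With `n = 2m`: the left side is `A = [0, m)`, `F = [m, 2m)`, the right side is
`B' = [2m, 3m]`, `H = (3m, 4m)`, and the path is `2m, 0, 2m + 1, 1, …, m - 1, 3m`. -/
def Link (m a b : ℕ) : Prop :=
  a < 2 * m ∧ 2 * m ≤ b ∧ (b = 2 * m + a ∨ b = 2 * m + a + 1 ∨ m ≤ a ∨ 3 * m < b)

instance (m a b : ℕ) : Decidable (Link m a b) := by unfold Link; infer_instance

def graph (m : ℕ) : SimpleGraph (Fin (2 * (2 * m))) where
  Adj u v := Link m u v ∨ Link m v u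
  symm.symm _ _ := Or.symm
  loopless.irrefl _ h := by unfold Link at h; omega

instance (m : ℕ) : DecidableRel (graph m).Adj := fun u v =>
  inferInstanceAs (Decidable (Link m u v ∨ Link m v u))

theorem degree_graph (m : ℕ) (v : Fin (2 * (2 * m))) :
    (graph m).degree v = #{k ∈ Iio (2 * (2 * m)) | Link m v k ∨ Link m k v} := by
  rw [← card_neighborFinset_eq_degree, neighborFinset_eq_filter,
    ← Fin.card_filter_val _ fun k => Link m v k ∨ Link m k v]
  rfl

theorem card_le_degree {m : ℕ} {v : Fin (2 * (2 * m))} {T : Finset ℕ}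
    (hT : ∀ k ∈ T, k < 2 * (2 * m) ∧ (Link m v k ∨ Link m k v)) :
    #T ≤ (graph m).degree v := by
  rw [degree_graph]
  exact card_le_card fun k hk => mem_filter.2 ⟨mem_Iio.2 (hT k hk).1, (hT k hk).2⟩

theorem le_degree {m : ℕ} (hm : 0 < m) (v : Fin (2 * (2 * m))) :
    m + 1 ≤ (graph m).degree v := by
  -- the `min` gives the path neighbours of `v ∈ A ∪ B'`; for `v ∈ F ∪ H` it lands at the end of
  -- the path, which is still adjacent to `v`
  rcases Nat.lt_or_ge v (2 * m) with hleft | hright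
  · set b := 2 * m + min (v : ℕ) (m - 1)
    calc m + 1 = #(insert b (insert (b + 1) (Ioo (3 * m) (4 * m)))) := by
          rw [card_insert_of_notMem (by simp only [mem_insert, mem_Ioo]; omega),
            card_insert_of_notMem (by simp only [mem_Ioo]; omega), Nat.card_Ioo]; omega
      _ ≤ _ := card_le_degree fun k hk => by
          simp only [mem_insert, mem_Ioo] at hk; unfold Link; omega
  · set a := min ((v : ℕ) - 2 * m) (m - 1)
    calc m + 1 = #(insert a (Ico m (2 * m))) := by
          rw [card_insert_of_notMem (by simp only [mem_Ico]; omega), Nat.card_Ico]; omega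
      _ ≤ _ := card_le_degree fun k hk => by
          simp only [mem_insert, mem_Ico] at hk; unfold Link; omega

/-- The position of a vertex of `A ∪ B'` along the path. -/
def pathLabel (m k : ℕ) : ℕ := if k < 2 * m then 2 * k + 1 else 2 * (k - 2 * m)

def pathSet (m : ℕ) : Finset (Fin (2 * (2 * m))) := {v | v < m ∨ 2 * m ≤ v ∧ v ≤ 3 * m}

theorem isAcyclic_induce_pathSet (m : ℕ) : ((graph m).induce (pathSet m : Set _)).IsAcyclic := by
  have hS : ∀ x : (pathSet m : Set (Fin (2 * (2 * m)))),
      (x : ℕ) < m ∨ 2 * m ≤ (x : ℕ) ∧ (x : ℕ) ≤ 3 * m := fun x => by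
    simpa [pathSet] using x.2
  refine isAcyclic_hasse.comap ⟨fun x => pathLabel m x, fun {x y} hxy => ?_⟩ fun x y hxy => ?_
  · have := hS x; have := hS y
    simp only [comap_adj, Function.Embedding.subtype_apply, graph, Link] at hxy
    simp only [hasse_adj, Nat.covBy_iff_add_one_eq, pathLabel]
    split_ifs <;> omega
  · have := hS x; have := hS y
    change pathLabel m x = pathLabel m y at hxy
    unfold pathLabel at hxy
    apply Subtype.ext; apply Fin.ext
    split_ifs at hxy <;> omega

def leftPart (m : ℕ) : Finset (Fin (2 * (2 * m))) := {v | v < 2 * m}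

def rightPart (m : ℕ) : Finset (Fin (2 * (2 * m))) := {v | 2 * m ≤ v}

theorem disjoint_leftPart_rightPart (m : ℕ) : Disjoint (leftPart m) (rightPart m) :=
  disjoint_filter.2 fun _ _ h₁ h₂ => by omega

theorem leftPart_union_rightPart (m : ℕ) : leftPart m ∪ rightPart m = univ := by
  ext v; simp only [leftPart, rightPart, mem_union, mem_filter, mem_univ, true_and, iff_true]; omega

theorem card_leftPart (m : ℕ) : #(leftPart m) = 2 * m :=
  (Fin.card_filter_eq_sub (a := 0) (b := 2 * m) (by omega) _ fun _ => by omega).trans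
    (Nat.sub_zero _)

theorem card_rightPart (m : ℕ) : #(rightPart m) = 2 * m :=
  (Fin.card_filter_eq_sub (a := 2 * m) le_rfl _ fun _ => by omega).trans (by omega)

theorem adj_leftPart_rightPart {m : ℕ} {u v : Fin (2 * (2 * m))} (h : (graph m).Adj u v) :
    u ∈ leftPart m ∧ v ∈ rightPart m ∨ u ∈ rightPart m ∧ v ∈ leftPart m := by
  simp only [leftPart, rightPart, mem_filter, mem_univ, true_and]
  unfold graph Link at h
  omega

theorem card_pathSet_inter_leftPart (m : ℕ) : #(pathSet m ∩ leftPart m) = m := by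
  rw [pathSet, leftPart, ← filter_and]
  exact (Fin.card_filter_eq_sub (a := 0) (b := m) (by omega) _ fun _ => by omega).trans
    (Nat.sub_zero _)

theorem card_pathSet_inter_rightPart {m : ℕ} (hm : 0 < m) :
    #(pathSet m ∩ rightPart m) = m + 1 := by
  rw [pathSet, rightPart, ← filter_and]
  exact (Fin.card_filter_eq_sub (a := 2 * m) (b := 3 * m + 1) (by omega) _ fun _ => by omega).trans
    (by omega)

theorem card_pathSet {m : ℕ} (hm : 0 < m) : #(pathSet m) = 2 * m + 1 := by
  rw [← inter_univ (pathSet m), ← leftPart_union_rightPart, inter_union_distrib_left,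
    card_union_of_disjoint
      ((disjoint_leftPart_rightPart m).mono inter_subset_right inter_subset_right),
    card_pathSet_inter_leftPart, card_pathSet_inter_rightPart hm]
  omega

end PathJoin

theorem stmt10 (n : ℕ) (hn : 4 ≤ n) (heven : Even n) :
    ∃ (G : SimpleGraph (Fin (2 * n))) (_ : DecidableRel G.Adj)
      (V1 V2 : Finset (Fin (2 * n))),
      Disjoint V1 V2 ∧ V1 ∪ V2 = Finset.univ ∧ V1.card = n ∧ V2.card = n ∧
      (∀ u v, G.Adj u v → (u ∈ V1 ∧ v ∈ V2) ∨ (u ∈ V2 ∧ v ∈ V1)) ∧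
      (∀ v, n + 2 ≤ 2 * G.degree v) ∧
      ∃ S : Finset (Fin (2 * n)), S.card = n + 1 ∧
        (G.induce (S : Set (Fin (2 * n)))).IsAcyclic ∧
        2 * min (S ∩ V1).card (S ∩ V2).card = n := by
  obtain ⟨m, rfl⟩ := heven.two_dvd
  have hm : 0 < m := by omega
  refine ⟨PathJoin.graph m, inferInstance, PathJoin.leftPart m, PathJoin.rightPart m,
    PathJoin.disjoint_leftPart_rightPart m, PathJoin.leftPart_union_rightPart m,
    PathJoin.card_leftPart m, PathJoin.card_rightPart m, fun _ _ => PathJoin.adj_leftPart_rightPart,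
    fun v => ?_, PathJoin.pathSet m, PathJoin.card_pathSet hm,
    PathJoin.isAcyclic_induce_pathSet m, ?_⟩
  · have := PathJoin.le_degree hm v
    omega
  · rw [PathJoin.card_pathSet_inter_leftPart, PathJoin.card_pathSet_inter_rightPart hm]
    omega
end

section
/- For every integer k ≥ 2 there exist infinitely many balanced bipartite graphs G with minimum degree exactly k and forest number f(G) = |V(G)|/2 + 1. -/
open Finset SimpleGraph

lemma c4_not_acyclic {V : Type*} (G : SimpleGraph V) {a b c d : V}
    (hab : G.Adj a b) (hbc : G.Adj b c) (hcd : G.Adj c d) (hda : G.Adj d a)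
    (hac : a ≠ c) (hbd : b ≠ d) : ¬ G.IsAcyclic := by
  intro h
  have hp1 : (Walk.cons hab (Walk.cons hbc Walk.nil)).IsPath := by
    simp [Walk.isPath_def, hab.ne, hbc.ne, hac]
  have hp2 : (Walk.cons hda.symm (Walk.cons hcd.symm Walk.nil)).IsPath := by
    simp [Walk.isPath_def, hda.ne', hcd.ne', hac]
  have he := h.path_unique ⟨_, hp1⟩ ⟨_, hp2⟩
  have hs := congrArg (fun p : G.Path a c => (p : G.Walk a c).support) he
  simp at hs
  exact hbd hs

lemma star_acyclic {V : Type*} (G : SimpleGraph V) (x : V)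
    (h : ∀ u v, G.Adj u v → u = x ∨ v = x) : G.IsAcyclic := by
  intro v c hc
  have h3 := hc.three_le_length
  match c, hc, h3 with
  | Walk.cons h1 (Walk.cons h2 (Walk.cons h3 q)), hc, _ =>
    rename_i a b w2 hlen
    have hnd := hc.2
    simp [Walk.support_cons, List.nodup_cons] at hnd
    have hvq : v ∈ q.support := Walk.end_mem_support q
    have hw2 : w2 ∈ q.support := Walk.start_mem_support q
    rcases h _ _ h1 with hv | ha
    · rcases h _ _ h2 with ha | hb
      · exact hnd.1.2 (by rw [ha, ← hv]; exact hvq)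
      · exact hnd.2.1 (by rw [hb, ← hv]; exact hvq)
    · rcases h _ _ h3 with hb | hw
      · exact hnd.1.1 (ha.trans hb.symm)
      · exact hnd.1.2 (by rw [ha, ← hw]; exact hw2)

theorem stmt11 (k : ℕ) (hk : 2 ≤ k) (N : ℕ) :
    ∃ m : ℕ, N ≤ m ∧
      ∃ (G : SimpleGraph (Fin (2 * m))) (_ : DecidableRel G.Adj)
        (V1 V2 : Finset (Fin (2 * m))),
        Disjoint V1 V2 ∧ V1 ∪ V2 = Finset.univ ∧ V1.card = m ∧ V2.card = m ∧
        (∀ u v, G.Adj u v → (u ∈ V1 ∧ v ∈ V2) ∨ (u ∈ V2 ∧ v ∈ V1)) ∧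
        (∀ v, k ≤ G.degree v) ∧ (∃ v, G.degree v = k) ∧
        forestNum G = m + 1 := by
  set m := N + k + 1 with hm
  have hmk : k + 1 ≤ m := by omega
  refine ⟨m, by omega, ?_⟩
  set P : Fin (2 * m) → Fin (2 * m) → Prop :=
    fun u v => u.val < m ∧ m ≤ v.val ∧ (0 < u.val ∨ v.val < m + k) with hP
  set G := SimpleGraph.fromRel P with hG
  have hadj : ∀ u v : Fin (2 * m), G.Adj u v ↔ u ≠ v ∧ (P u v ∨ P v u) :=
    fun u v => SimpleGraph.fromRel_adj P u v
  have inst : DecidableRel G.Adj := fun u v =>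
    decidable_of_iff _ (hadj u v).symm
  set V1 : Finset (Fin (2 * m)) := Finset.attachFin (Finset.range m)
    (fun x hx => by simp at hx; omega) with hV1
  set V2 : Finset (Fin (2 * m)) := Finset.attachFin (Finset.Ico m (2 * m))
    (fun x hx => by simp at hx; omega) with hV2
  have hV1mem : ∀ v : Fin (2 * m), v ∈ V1 ↔ v.val < m := by
    intro v; simp [hV1, Finset.mem_attachFin]
  have hV2mem : ∀ v : Fin (2 * m), v ∈ V2 ↔ m ≤ v.val := by
    intro v; simp only [hV2, Finset.mem_attachFin, Finset.mem_Ico]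
    have := v.isLt; omega
  have hdegk : ∀ v : Fin (2 * m), k ≤ G.degree v := by
    intro v
    have hsub : ∀ (T : Finset (Fin (2 * m))), (∀ w ∈ T, G.Adj v w) →
        T.card ≤ G.degree v := by
      intro T hT
      exact Finset.card_le_card fun w hw =>
        (SimpleGraph.mem_neighborFinset G v w).2 (hT w hw)
    rcases lt_trichotomy v.val 0 with h | h | h
    · omega
    · -- v.val = 0
      have : k ≤ (Finset.attachFin (Finset.Ico m (m + k))
          (fun x hx => by simp at hx; omega) : Finset (Fin (2 * m))).card := by
        rw [Finset.card_attachFin, Nat.card_Ico]; omega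
      refine this.trans (hsub _ ?_)
      intro w hw
      rw [Finset.mem_attachFin, Finset.mem_Ico] at hw
      rw [hadj]
      constructor
      · intro hvw; rw [← hvw] at hw; omega
      · left; refine ⟨by omega, by omega, Or.inr (by omega)⟩
    · rcases lt_or_ge v.val m with h2 | h2
      · -- 0 < v.val < m
        have : k ≤ V2.card := by rw [hV2, Finset.card_attachFin, Nat.card_Ico]; omega
        refine this.trans (hsub _ ?_)
        intro w hw
        rw [hV2mem] at hw
        rw [hadj]
        constructor
        · intro hvw; rw [← hvw] at hw; omega
        · left; exact ⟨h2, hw, Or.inl h⟩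
      · -- m ≤ v.val
        have : k ≤ (Finset.attachFin (Finset.Ico 1 m)
            (fun x hx => by simp at hx; omega) : Finset (Fin (2 * m))).card := by
          rw [Finset.card_attachFin, Nat.card_Ico]; omega
        refine this.trans (hsub _ ?_)
        intro w hw
        rw [Finset.mem_attachFin, Finset.mem_Ico] at hw
        rw [hadj]
        constructor
        · intro hvw; rw [← hvw] at hw; omega
        · right; exact ⟨by omega, h2, Or.inl hw.1⟩
  refine ⟨G, inst, V1, V2, ?_, ?_, ?_, ?_, ?_, hdegk, ?_, ?_⟩
  · rw [Finset.disjoint_left]; intro a h1 h2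
    rw [hV1mem] at h1; rw [hV2mem] at h2; omega
  · ext v; simp only [Finset.mem_union, hV1mem, hV2mem, Finset.mem_univ, iff_true]; omega
  · rw [hV1, Finset.card_attachFin]; simp
  · rw [hV2, Finset.card_attachFin]; simp [Nat.card_Ico]; omega
  · intro u v huv
    rw [hadj] at huv
    rcases huv.2 with h | h
    · exact Or.inl ⟨(hV1mem u).2 h.1, (hV2mem v).2 h.2.1⟩
    · exact Or.inr ⟨(hV2mem u).2 h.2.1, (hV1mem v).2 h.1⟩
  · -- exists degree k
    have h2m : 0 < 2 * m := by omega
    refine ⟨⟨0, h2m⟩, ?_⟩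
    set v0 : Fin (2 * m) := ⟨0, h2m⟩ with hv0def
    have hv0 : v0.val = 0 := rfl
    refine le_antisymm ?_ (hdegk v0)
    have hsub : G.neighborFinset v0 ⊆ Finset.attachFin (Finset.Ico m (m + k))
        (fun x hx => by simp at hx; omega) := by
      intro w hw
      rw [SimpleGraph.mem_neighborFinset, hadj] at hw
      obtain ⟨hne, h | h⟩ := hw
      · rcases h.2.2 with h' | h'
        · omega
        · exact Finset.mem_attachFin _ |>.2 (Finset.mem_Ico.2 ⟨h.2.1, h'⟩)
      · have := h.2.1; omega
    calc G.degree v0 ≤ _ := Finset.card_le_card hsub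
      _ = k := by rw [Finset.card_attachFin, Nat.card_Ico]; omega
  · -- forest number
    have hmem : (m + 1) ∈ {n | ∃ S : Finset (Fin (2 * m)), S.card = n ∧
        (G.induce (S : Set (Fin (2 * m)))).IsAcyclic} := by
      have hb0 : (m : ℕ) < 2 * m := by omega
      set b0 : Fin (2 * m) := ⟨m, hb0⟩ with hb0def
      have hb0val : b0.val = m := rfl
      refine ⟨insert b0 V1, ?_, ?_⟩
      · rw [Finset.card_insert_of_notMem (by rw [hV1mem, hb0val]; omega)]
        rw [hV1, Finset.card_attachFin]; simp
      · have hb0S : b0 ∈ ((insert b0 V1 : Finset (Fin (2 * m))) : Set (Fin (2 * m))) := by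
          simp
        apply star_acyclic _ ⟨b0, hb0S⟩
        rintro ⟨u, hu⟩ ⟨w, hw⟩ huw
        rw [SimpleGraph.comap_adj] at huw
        simp only [Function.Embedding.coe_subtype] at huw
        rw [hadj] at huw
        simp only [Finset.coe_insert, Set.mem_insert_iff, Finset.mem_coe] at hu hw
        have hum : u = b0 ∨ u.val < m := by
          rcases hu with h | h
          · exact Or.inl h
          · exact Or.inr ((hV1mem u).1 h)
        have hwm : w = b0 ∨ w.val < m := by
          rcases hw with h | h
          · exact Or.inl h
          · exact Or.inr ((hV1mem w).1 h)
        rcases huw.2 with hP1 | hP1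
        · -- m ≤ w.val
          rcases hwm with h | h
          · exact Or.inr (Subtype.ext h)
          · exact absurd hP1.2.1 (by omega)
        · rcases hum with h | h
          · exact Or.inl (Subtype.ext h)
          · exact absurd hP1.2.1 (by omega)
    have hub : ∀ n ∈ {n | ∃ S : Finset (Fin (2 * m)), S.card = n ∧
        (G.induce (S : Set (Fin (2 * m)))).IsAcyclic}, n ≤ m + 1 := by
      rintro n ⟨S, hScard, hSacyc⟩
      by_contra hcon
      push_neg at hcon
      have hn : m + 2 ≤ S.card := by omega
      set SA := S.filter (fun v => v.val < m) with hSA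
      set SB := S.filter (fun v => ¬ v.val < m) with hSB
      have hsum : SA.card + SB.card = S.card :=
        Finset.card_filter_add_card_filter_not (s := S) (p := fun v => v.val < m)
      have hSAle : SA.card ≤ m := by
        have : SA ⊆ V1 := fun v hv => (hV1mem v).2 (Finset.mem_filter.1 hv).2
        calc SA.card ≤ V1.card := Finset.card_le_card this
          _ = m := by rw [hV1, Finset.card_attachFin]; simp
      have hSBle : SB.card ≤ m := by
        have : SB ⊆ V2 := fun v hv => (hV2mem v).2 (by
          have := (Finset.mem_filter.1 hv).2; omega)
        calc SB.card ≤ V2.card := Finset.card_le_card this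
          _ = m := by rw [hV2, Finset.card_attachFin, Nat.card_Ico]; omega
      -- find the C4
      have hquad : ∃ x1 ∈ S, ∃ x2 ∈ S, ∃ b1 ∈ S, ∃ b2 ∈ S,
          x1 ≠ x2 ∧ b1 ≠ b2 ∧ G.Adj x1 b1 ∧ G.Adj x1 b2 ∧ G.Adj x2 b1 ∧ G.Adj x2 b2 := by
        have hadj' : ∀ x b : Fin (2 * m), x.val < m → m ≤ b.val →
            (0 < x.val ∨ b.val < m + k) → G.Adj x b := by
          intro x b h1 h2 h3
          rw [hadj]
          exact ⟨by intro he; rw [he] at h1; omega, Or.inl ⟨h1, h2, h3⟩⟩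
        rcases le_or_gt 2 ((SA.filter (fun v => 0 < v.val)).card) with hc | hc
        · obtain ⟨x1, hx1, x2, hx2, hx12⟩ := Finset.one_lt_card.1
            (show 1 < (SA.filter (fun v => 0 < v.val)).card by omega)
          obtain ⟨b1, hb1, b2, hb2, hb12⟩ := Finset.one_lt_card.1
            (show 1 < SB.card by omega)
          rw [Finset.mem_filter] at hx1 hx2
          have hx1' := Finset.mem_filter.1 hx1.1
          have hx2' := Finset.mem_filter.1 hx2.1
          have hb1' := Finset.mem_filter.1 hb1
          have hb2' := Finset.mem_filter.1 hb2
          exact ⟨x1, hx1'.1, x2, hx2'.1, b1, hb1'.1, b2, hb2'.1, hx12, hb12,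
            hadj' _ _ hx1'.2 (by omega) (Or.inl hx1.2),
            hadj' _ _ hx1'.2 (by omega) (Or.inl hx1.2),
            hadj' _ _ hx2'.2 (by omega) (Or.inl hx2.2),
            hadj' _ _ hx2'.2 (by omega) (Or.inl hx2.2)⟩
        · -- SA.card ≤ 2, so SB = V2
          have hSA2 : SA.card ≤ 2 := by
            have hss : SA ⊆ insert (⟨0, by omega⟩ : Fin (2 * m))
                (SA.filter (fun v => 0 < v.val)) := by
              intro a ha
              rcases Nat.eq_zero_or_pos a.val with h0 | h0
              · exact Finset.mem_insert.2 (Or.inl (Fin.ext h0))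
              · exact Finset.mem_insert.2 (Or.inr (Finset.mem_filter.2 ⟨ha, h0⟩))
            calc SA.card ≤ _ := Finset.card_le_card hss
              _ ≤ (SA.filter (fun v => 0 < v.val)).card + 1 := Finset.card_insert_le _ _
              _ ≤ 2 := by omega
          have hSBV2 : SB = V2 := by
            apply Finset.eq_of_subset_of_card_le
            · exact fun v hv => (hV2mem v).2 (by
                have := (Finset.mem_filter.1 hv).2; omega)
            · have : V2.card = m := by rw [hV2, Finset.card_attachFin, Nat.card_Ico]; omega
              omega
          obtain ⟨x1, hx1, x2, hx2, hx12⟩ := Finset.one_lt_card.1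
            (show 1 < SA.card by omega)
          have hx1' := Finset.mem_filter.1 hx1
          have hx2' := Finset.mem_filter.1 hx2
          have hmb1 : (⟨m, by omega⟩ : Fin (2 * m)) ∈ SB := by
            rw [hSBV2, hV2mem]
          have hmb2 : (⟨m + 1, by omega⟩ : Fin (2 * m)) ∈ SB := by
            rw [hSBV2, hV2mem]; exact Nat.le_succ m
          refine ⟨x1, hx1'.1, x2, hx2'.1, _, (Finset.mem_filter.1 hmb1).1,
            _, (Finset.mem_filter.1 hmb2).1, hx12, ?_, ?_, ?_, ?_, ?_⟩
          · intro he; simp only [Fin.mk.injEq] at he; omega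
          · exact hadj' _ _ hx1'.2 le_rfl (Or.inr (show m < m + k by omega))
          · exact hadj' _ _ hx1'.2 (Nat.le_succ m) (Or.inr (show m + 1 < m + k by omega))
          · exact hadj' _ _ hx2'.2 le_rfl (Or.inr (show m < m + k by omega))
          · exact hadj' _ _ hx2'.2 (Nat.le_succ m) (Or.inr (show m + 1 < m + k by omega))
      obtain ⟨x1, hx1S, x2, hx2S, b1, hb1S, b2, hb2S, hx12, hb12,
        ha11, ha12, ha21, ha22⟩ := hquad
      refine c4_not_acyclic (G.induce (S : Set (Fin (2 * m))))
        (a := ⟨x1, hx1S⟩) (b := ⟨b1, hb1S⟩) (c := ⟨x2, hx2S⟩) (d := ⟨b2, hb2S⟩)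
        ?_ ?_ ?_ ?_ ?_ ?_ hSacyc
      · exact ha11
      · exact ha21.symm
      · exact ha22
      · exact ha12.symm
      · exact fun he => hx12 (congrArg Subtype.val he)
      · exact fun he => hb12 (congrArg Subtype.val he)
    have hbdd : BddAbove {n | ∃ S : Finset (Fin (2 * m)), S.card = n ∧
        (G.induce (S : Set (Fin (2 * m)))).IsAcyclic} := ⟨m + 1, fun n hn => hub n hn⟩
    rw [forestNum]
    exact le_antisymm (csSup_le ⟨m + 1, hmem⟩ hub) (le_csSup hbdd hmem)
end

section
/- Let G be a balanced bipartite graph with parts of size n each. Then the forest number f(G) and the decycling number ∇(G) satisfy f(G) + ∇(G) = 2n; consequently, if the minimum degree is at least n/2 + 1, then ∇(G) = n − 1. -/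
open Finset SimpleGraph

/-- The decycling number of `G`: the minimum size of a vertex subset whose removal
leaves an acyclic (induced) subgraph. -/
noncomputable def decyclingNum {V : Type} [Fintype V] [DecidableEq V] (G : SimpleGraph V) : ℕ :=
  sInf {k | ∃ S : Finset V, S.card = k ∧ (G.induce ((Finset.univ \ S : Finset V) : Set V)).IsAcyclic}

/-
Complementation exchanges vertex sets inducing forests with decycling sets, so
`f(G) + ∇(G) = |V|`. The part `V2` is independent, so `V2` together with one vertex of `V1`
induces a star and `f(G) ≥ n + 1`. Conversely let `S` have `n + 2` vertices, `a ≤ b` of them in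
`V1`, `V2` (after swapping the parts). A vertex of `S ∩ V1` has at least `(n + 2) / 2` neighbours
in `V2`, of which at most `n - b = a - 2` lie outside `S`; so `G[S]` has at least
`a ((n + 2) / 2 - a + 2) ≥ n + 2` edges, the last step being `(a - 2) (n + 2 - 2a) ≥ 0`.
A forest on `n + 2` vertices has at most `n + 1` edges, so `f(G) ≤ n + 1`.
-/

namespace SimpleGraph

variable {V : Type} (G : SimpleGraph V)

theorem IsAcyclic.card_edgeFinset_lt [Fintype V] [Nonempty V] [DecidableRel G.Adj]
    (hG : G.IsAcyclic) : #G.edgeFinset < Fintype.card V := by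
  classical
  obtain ⟨T, hGT, -, hT⟩ := connected_top.exists_isTree_le_of_le_of_isAcyclic le_top hG
  rw [← hT.card_edgeFinset]
  exact Nat.lt_succ_of_le (card_le_card (edgeFinset_mono hGT))

theorem isAcyclic_induce_insert_of_isIndepSet [DecidableEq V] {t : Finset V}
    (ht : G.IsIndepSet (t : Set V)) (v : V) : (G.induce ↑(insert v t)).IsAcyclic := by
  refine (isAcyclic_starGraph ⟨v, by simp⟩).anti fun x y hxy => ?_
  rw [starGraph_adj]
  refine ⟨hxy.ne, ?_⟩
  by_contra! hne
  have hx : x.1 ∈ t := (mem_insert.1 x.2).resolve_left fun h => hne.1 (Subtype.ext h)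
  have hy : y.1 ∈ t := (mem_insert.1 y.2).resolve_left fun h => hne.2 (Subtype.ext h)
  exact ht hx hy (Subtype.coe_ne_coe.2 hxy.ne) hxy

theorem degree_le_degree_induce_add [Fintype V] [DecidableEq V] [DecidableRel G.Adj]
    {s t : Finset V} {v : V} (hv : v ∈ s) (ht : G.neighborFinset v ⊆ t) :
    G.degree v ≤ (G.induce (s : Set V)).degree ⟨v, hv⟩ + #(t \ s) := by
  have hinduce : (G.induce (s : Set V)).degree ⟨v, hv⟩ = #(G.neighborFinset v ∩ s) := by
    rw [← card_neighborFinset_eq_degree, ← card_map (Function.Embedding.subtype _)]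
    convert congrArg card (map_neighborFinset_induce (G := G) ⟨v, hv⟩) using 3 <;> ext <;> simp
  rw [hinduce, ← card_neighborFinset_eq_degree]
  calc #(G.neighborFinset v) ≤ #(G.neighborFinset v ∩ s ∪ t \ s) := by
        refine card_le_card fun w hw => ?_
        by_cases hws : w ∈ s
        · exact mem_union_left _ (mem_inter.2 ⟨hw, hws⟩)
        · exact mem_union_right _ (mem_sdiff.2 ⟨ht hw, hws⟩)
    _ ≤ _ := card_union_le _ _

theorem not_isAcyclic_induce_of_card_eq_add_two [Fintype V] [DecidableEq V] [DecidableRel G.Adj]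
    {V1 V2 S : Finset V} {n : ℕ} (hG : G.IsBipartiteWith ↑V1 ↑V2) (hV2 : #V2 = n)
    (hdeg : ∀ v, n + 2 ≤ 2 * G.degree v) (hSV : S ⊆ V1 ∪ V2) (hS : #S = n + 2)
    (hle : #(V1 ∩ S) ≤ #(V2 ∩ S)) : ¬ (G.induce (S : Set V)).IsAcyclic := by
  intro hac
  set H := G.induce (S : Set V)
  set A := V1.subtype (· ∈ (S : Set V))
  set B := V2.subtype (· ∈ (S : Set V))
  have hH : H.IsBipartiteWith ↑A ↑B :=
    ⟨Set.disjoint_left.2 fun x hxA hxB => Set.disjoint_left.1 hG.disjoint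
      (mem_subtype.1 (mem_coe.1 hxA)) (mem_subtype.1 (mem_coe.1 hxB)),
     fun x y hxy => by simpa [A, B] using hG.mem_of_adj hxy⟩
  have hA : #A = #(V1 ∩ S) := by
    rw [card_subtype]; simp only [SetLike.mem_coe, filter_mem_eq_inter]
  have hsplit : #(V1 ∩ S) + #(V2 ∩ S) = n + 2 := by
    have hdisj : Disjoint (V1 ∩ S) (V2 ∩ S) :=
      (disjoint_coe.1 hG.disjoint).mono inter_subset_left inter_subset_left
    rw [← hS, ← card_union_of_disjoint hdisj, ← union_inter_distrib_right,
      inter_eq_right.2 hSV]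
  have hmissing : #(V2 \ S) + #(V2 ∩ S) = n := hV2 ▸ card_sdiff_add_card_inter V2 S
  have hdegA : ∀ x ∈ A, n + 2 ≤ 2 * (H.degree x + #(V2 \ S)) := fun x hx =>
    (hdeg x).trans <| Nat.mul_le_mul_left 2 <| G.degree_le_degree_induce_add x.2
      fun y hy => ((hG.mem_of_adj ((mem_neighborFinset ..).1 hy)).resolve_right
        fun h => Set.disjoint_left.1 hG.disjoint (mem_subtype.1 hx) h.1).2
  have hedges : #H.edgeFinset + 1 ≤ n + 2 := by
    have : Nonempty (S : Set V) := ⟨⟨_, (card_pos.1 (by omega : 0 < #S)).choose_spec⟩⟩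
    have := hac.card_edgeFinset_lt
    simp only [SetLike.coe_sort_coe, Fintype.card_coe] at this
    omega
  have hcount : #A * (n + 2) ≤ 2 * #H.edgeFinset + 2 * #A * #(V2 \ S) :=
    calc #A * (n + 2) = ∑ _x ∈ A, (n + 2) := by rw [sum_const, smul_eq_mul]
      _ ≤ ∑ x ∈ A, 2 * (H.degree x + #(V2 \ S)) := sum_le_sum hdegA
      _ = 2 * ∑ x ∈ A, H.degree x + 2 * #A * #(V2 \ S) := by
        rw [← mul_sum, sum_add_distrib, sum_const, smul_eq_mul]; ring
      _ = 2 * #H.edgeFinset + 2 * #A * #(V2 \ S) := by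
        rw [isBipartiteWith_sum_degrees_eq_card_edges hH]
  rw [hA] at hcount
  nlinarith

theorem card_le_of_isAcyclic_induce [Fintype V] [DecidableEq V] [DecidableRel G.Adj]
    {V1 V2 S : Finset V} {n : ℕ} (hG : G.IsBipartiteWith ↑V1 ↑V2) (hunion : V1 ∪ V2 = univ)
    (hV1 : #V1 = n) (hV2 : #V2 = n) (hdeg : ∀ v, n + 2 ≤ 2 * G.degree v)
    (hS : (G.induce (S : Set V)).IsAcyclic) : #S ≤ n + 1 := by
  by_contra! hbig
  obtain ⟨T, hTS, hT⟩ := exists_subset_card_eq (show n + 2 ≤ #S by omega)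
  have hTac : (G.induce (T : Set V)).IsAcyclic :=
    hS.embedding (G.induceHomOfLE (coe_subset.2 hTS))
  have hTV : T ⊆ V1 ∪ V2 := hunion ▸ subset_univ T
  rcases le_total #(V1 ∩ T) #(V2 ∩ T) with hle | hle
  · exact G.not_isAcyclic_induce_of_card_eq_add_two hG hV2 hdeg hTV hT hle hTac
  · exact G.not_isAcyclic_induce_of_card_eq_add_two hG.symm hV1 hdeg (union_comm V1 V2 ▸ hTV) hT
      hle hTac

end SimpleGraph

section ForestNumber

variable {V : Type} [Fintype V] (G : SimpleGraph V)

theorem le_forestNum {S : Finset V} (hS : (G.induce (S : Set V)).IsAcyclic) :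
    #S ≤ forestNum G := by
  unfold forestNum
  refine le_csSup ⟨Fintype.card V, ?_⟩ ⟨S, rfl, hS⟩
  rintro _ ⟨T, rfl, -⟩
  exact card_le_univ T

theorem exists_isAcyclic_card_eq_forestNum :
    ∃ S : Finset V, #S = forestNum G ∧ (G.induce (S : Set V)).IsAcyclic := by
  show sSup _ ∈ {k | ∃ S : Finset V, #S = k ∧ (G.induce (S : Set V)).IsAcyclic}
  refine Nat.sSup_mem ⟨0, ?_⟩ ⟨Fintype.card V, ?_⟩
  · exact ⟨∅, rfl, fun v => (notMem_empty v.1 v.2).elim⟩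
  · rintro _ ⟨T, rfl, -⟩
    exact card_le_univ T

theorem forestNum_le {k : ℕ}
    (h : ∀ S : Finset V, (G.induce (S : Set V)).IsAcyclic → #S ≤ k) : forestNum G ≤ k := by
  obtain ⟨S, hS, hac⟩ := exists_isAcyclic_card_eq_forestNum G
  exact hS ▸ h S hac

variable [DecidableEq V]

theorem decyclingNum_le {S : Finset V}
    (hS : (G.induce ((univ \ S : Finset V) : Set V)).IsAcyclic) : decyclingNum G ≤ #S :=
  Nat.sInf_le ⟨S, rfl, hS⟩

theorem exists_isAcyclic_compl_card_eq_decyclingNum :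
    ∃ S : Finset V,
      #S = decyclingNum G ∧ (G.induce ((univ \ S : Finset V) : Set V)).IsAcyclic := by
  show sInf _ ∈
    {k | ∃ S : Finset V, #S = k ∧ (G.induce ((univ \ S : Finset V) : Set V)).IsAcyclic}
  refine Nat.sInf_mem ⟨_, univ, rfl, ?_⟩
  rw [sdiff_self]
  exact fun v => (notMem_empty v.1 v.2).elim

theorem forestNum_add_decyclingNum : forestNum G + decyclingNum G = Fintype.card V := by
  obtain ⟨F, hF, hFac⟩ := exists_isAcyclic_card_eq_forestNum G
  obtain ⟨D, hD, hDac⟩ := exists_isAcyclic_compl_card_eq_decyclingNum G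
  have hdecycle : decyclingNum G ≤ #(univ \ F) :=
    decyclingNum_le G (by rwa [sdiff_sdiff_right_self, inf_eq_inter, univ_inter])
  have hforest : #(univ \ D) ≤ forestNum G := le_forestNum G hDac
  rw [card_univ_sdiff] at hdecycle hforest
  have := card_le_univ D
  have := card_le_univ F
  omega

end ForestNumber

theorem stmt17 {V : Type} [Fintype V] [DecidableEq V] (G : SimpleGraph V)
    [DecidableRel G.Adj] (n : ℕ) (V1 V2 : Finset V)
    (hdisj : Disjoint V1 V2) (hunion : V1 ∪ V2 = Finset.univ)
    (hc1 : V1.card = n) (hc2 : V2.card = n)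
    (hbip : ∀ u v, G.Adj u v → (u ∈ V1 ∧ v ∈ V2) ∨ (u ∈ V2 ∧ v ∈ V1)) :
    forestNum G + decyclingNum G = 2 * n ∧
      ((∀ v, n + 2 ≤ 2 * G.degree v) → decyclingNum G = n - 1) := by
  have hG : G.IsBipartiteWith ↑V1 ↑V2 := ⟨disjoint_coe.2 hdisj, hbip⟩
  have hcard : Fintype.card V = 2 * n := by
    rw [← card_univ, ← hunion, card_union_of_disjoint hdisj, hc1, hc2, two_mul]
  have hsum : forestNum G + decyclingNum G = 2 * n := hcard ▸ forestNum_add_decyclingNum G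
  refine ⟨hsum, fun hdeg => ?_⟩
  rcases n.eq_zero_or_pos with rfl | hn
  · omega
  suffices forestNum G = n + 1 by omega
  refine le_antisymm (forestNum_le G fun S hS =>
    G.card_le_of_isAcyclic_induce hG hunion hc1 hc2 hdeg hS) ?_
  obtain ⟨v, hv⟩ := card_pos.1 (hc1 ▸ hn)
  have hV2 : G.IsIndepSet (V2 : Set V) := fun x hx y hy _ hxy =>
    (hG.mem_of_adj hxy).elim (fun h => disjoint_left.1 hdisj h.1 hx)
      (fun h => disjoint_left.1 hdisj h.2 hy)
  have hstar := le_forestNum G (G.isAcyclic_induce_insert_of_isIndepSet hV2 v)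
  rwa [card_insert_of_notMem (disjoint_left.1 hdisj hv), hc2] at hstar
end
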